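/- For every natural number n, s_F(ρ(n)) = s_F(n) and s_F(ρ(ρ(n)) + 1) = s_F(n) + 1. -/

import Mathlib

/-- The golden ratio `φ = (1 + √5)/2`. -/
noncomputable def phi : ℝ := (1 + Real.sqrt 5) / 2

/-- The Fibonacci shift `ρ(n) = ⌊nφ + 1/φ⌋`. -/
noncomputable def rho (n : ℕ) : ℕ := ⌊(n : ℝ) * phi + 1 / phi⌋₊

open Real goldenRatio Finset

lemma phi_eq_gold : phi = goldenRatio := rfl

lemma psi_sq : (ψ : ℝ) ^ 2 = ψ + 1 := goldenConj_sq

lemma psi_pow_sum (N : ℕ) : ∑ k ∈ Finset.range N, ((ψ : ℝ) ^ 2) ^ k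
    = ((ψ ^ 2) ^ N - 1) / (ψ ^ 2 - 1) := by
  apply geom_sum_eq
  have h := goldenConj_neg
  nlinarith [psi_sq]

/-- Upper bound on sums of powers of ψ over sets of indices ≥ 2. -/
lemma psi_sum_lt (S : Finset ℕ) (hS : ∀ i ∈ S, 2 ≤ i) :
    ∑ i ∈ S, ψ ^ i < -ψ := by
  classical
  set N : ℕ := S.sup id + 1 with hN
  have hinj : Set.InjOn (fun k => 2 * k + 2) (Finset.range N) := by
    intro a _ b _ h; dsimp only at h; omega
  have hsub : S.filter (fun i => Even i) ⊆ (Finset.range N).image (fun k => 2 * k + 2) := by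
    intro i hi
    simp only [Finset.mem_filter] at hi
    obtain ⟨hiS, hieven⟩ := hi
    have h2 : 2 ≤ i := hS i hiS
    obtain ⟨k, hk⟩ := hieven
    have : i ≤ S.sup id := Finset.le_sup (f := id) hiS
    exact Finset.mem_image.mpr ⟨i / 2 - 1, Finset.mem_range.mpr (by omega), by omega⟩
  have h1 : ∑ i ∈ S, ψ ^ i ≤ ∑ i ∈ S.filter (fun i => Even i), ψ ^ i := by
    rw [← Finset.sum_filter_add_sum_filter_not S (fun i => Even i)]
    have : ∑ i ∈ S.filter (fun i => ¬ Even i), ψ ^ i ≤ 0 := by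
      apply Finset.sum_nonpos
      intro i hi
      simp only [Finset.mem_filter] at hi
      exact le_of_lt (Odd.pow_neg ((Nat.not_even_iff_odd.mp hi.2)) goldenConj_neg)
    linarith
  have h2 : ∑ i ∈ S.filter (fun i => Even i), ψ ^ i
      ≤ ∑ i ∈ (Finset.range N).image (fun k => 2 * k + 2), ψ ^ i := by
    apply Finset.sum_le_sum_of_subset_of_nonneg hsub
    intro i hi _
    obtain ⟨k, _, hk⟩ := Finset.mem_image.mp hi
    have : Even i := ⟨k + 1, by omega⟩
    exact this.pow_nonneg ψ
  have h3 : ∑ i ∈ (Finset.range N).image (fun k => 2 * k + 2), ψ ^ i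
      = ψ ^ 2 * (((ψ ^ 2) ^ N - 1) / (ψ ^ 2 - 1)) := by
    rw [Finset.sum_image hinj, ← psi_pow_sum N, Finset.mul_sum]
    apply Finset.sum_congr rfl
    intro k _
    rw [pow_add, pow_mul]; ring
  have hψ : (ψ : ℝ) < 0 := goldenConj_neg
  have hψ1 : (-1 : ℝ) < ψ := neg_one_lt_goldenConj
  have hψne : (ψ : ℝ) ≠ 0 := goldenConj_ne_zero
  have hpow : (0 : ℝ) < (ψ ^ 2) ^ N := by positivity
  have hsq : (ψ : ℝ) ^ 2 = ψ + 1 := goldenConj_sq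
  have key : ψ ^ 2 * (((ψ ^ 2) ^ N - 1) / (ψ ^ 2 - 1)) < -ψ := by
    have hd : (ψ : ℝ) ^ 2 - 1 = ψ := by linarith
    rw [hd]
    have heq : ψ ^ 2 * (((ψ ^ 2) ^ N - 1) / ψ) = ψ * ((ψ ^ 2) ^ N - 1) := by
      calc ψ ^ 2 * (((ψ ^ 2) ^ N - 1) / ψ) = (ψ * ((ψ ^ 2) ^ N - 1)) * (ψ / ψ) := by ring
        _ = ψ * ((ψ ^ 2) ^ N - 1) := by rw [div_self hψne, mul_one]
    rw [heq]
    nlinarith [mul_neg_of_neg_of_pos hψ hpow]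
  linarith


/-- Lower bound on sums of powers of ψ over sets of indices ≥ 2. -/
lemma psi_sum_gt (S : Finset ℕ) (hS : ∀ i ∈ S, 2 ≤ i) :
    -ψ ^ 2 < ∑ i ∈ S, ψ ^ i := by
  classical
  set N : ℕ := S.sup id + 1 with hN
  have hψ : (ψ : ℝ) < 0 := goldenConj_neg
  have hψ1 : (-1 : ℝ) < ψ := neg_one_lt_goldenConj
  have hψne : (ψ : ℝ) ≠ 0 := goldenConj_ne_zero
  have hsq : (ψ : ℝ) ^ 2 = ψ + 1 := goldenConj_sq
  have hpow : (0 : ℝ) < (ψ ^ 2) ^ N := by positivity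
  have hinj : Set.InjOn (fun k => 2 * k + 3) (Finset.range N) := by
    intro a _ b _ h; dsimp only at h; omega
  have hsub : S.filter (fun i => ¬ Even i) ⊆ (Finset.range N).image (fun k => 2 * k + 3) := by
    intro i hi
    simp only [Finset.mem_filter] at hi
    obtain ⟨hiS, hiodd⟩ := hi
    have h2 : 2 ≤ i := hS i hiS
    obtain ⟨k, hk⟩ := Nat.not_even_iff_odd.mp hiodd
    have : i ≤ S.sup id := Finset.le_sup (f := id) hiS
    exact Finset.mem_image.mpr ⟨(i - 3) / 2, Finset.mem_range.mpr (by omega), by omega⟩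
  have h1 : ∑ i ∈ S.filter (fun i => ¬ Even i), ψ ^ i ≤ ∑ i ∈ S, ψ ^ i := by
    rw [← Finset.sum_filter_add_sum_filter_not S (fun i => Even i)]
    have : (0:ℝ) ≤ ∑ i ∈ S.filter (fun i => Even i), ψ ^ i := by
      apply Finset.sum_nonneg
      intro i hi
      simp only [Finset.mem_filter] at hi
      exact hi.2.pow_nonneg ψ
    linarith
  have h2 : ∑ i ∈ (Finset.range N).image (fun k => 2 * k + 3), ψ ^ i
      ≤ ∑ i ∈ S.filter (fun i => ¬ Even i), ψ ^ i := by
    have := Finset.sum_le_sum_of_subset_of_nonneg hsub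
      (f := fun i => -ψ ^ i) ?_
    · simp only [Finset.sum_neg_distrib] at this
      linarith
    · intro i hi _
      obtain ⟨k, _, hk⟩ := Finset.mem_image.mp hi
      have hodd : Odd i := ⟨k + 1, by omega⟩
      have := Odd.pow_neg hodd hψ
      linarith
  have h3 : ∑ i ∈ (Finset.range N).image (fun k => 2 * k + 3), ψ ^ i
      = ψ ^ 3 * (((ψ ^ 2) ^ N - 1) / (ψ ^ 2 - 1)) := by
    rw [Finset.sum_image hinj, ← psi_pow_sum N, Finset.mul_sum]
    apply Finset.sum_congr rfl
    intro k _
    rw [pow_add, pow_mul]; ring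
  have key : -ψ ^ 2 < ψ ^ 3 * (((ψ ^ 2) ^ N - 1) / (ψ ^ 2 - 1)) := by
    have hd : (ψ : ℝ) ^ 2 - 1 = ψ := by linarith
    rw [hd]
    have heq : ψ ^ 3 * (((ψ ^ 2) ^ N - 1) / ψ) = ψ ^ 2 * ((ψ ^ 2) ^ N - 1) := by
      calc ψ ^ 3 * (((ψ ^ 2) ^ N - 1) / ψ) = (ψ ^ 2 * ((ψ ^ 2) ^ N - 1)) * (ψ / ψ) := by ring
        _ = ψ ^ 2 * ((ψ ^ 2) ^ N - 1) := by rw [div_self hψne, mul_one]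
    rw [heq]
    have hp2 : (0:ℝ) < ψ ^ 2 := by positivity
    nlinarith [mul_pos hp2 hpow]
  linarith

/-- Key Binet-type identity. -/
lemma fib_shift (i : ℕ) : (Nat.fib (i + 1) : ℝ) = goldenRatio * Nat.fib i + ψ ^ i := by
  have := fib_succ_sub_goldenRatio_mul_fib i
  linarith

/-- `rho` shifts Zeckendorf-type sums. -/
lemma rho_sum (S : Finset ℕ) (hS : ∀ i ∈ S, 2 ≤ i) :
    rho (∑ i ∈ S, Nat.fib i) = ∑ i ∈ S, Nat.fib (i + 1) := by
  have hgold : (0:ℝ) < goldenRatio := goldenRatio_pos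
  have hψ : (ψ : ℝ) < 0 := goldenConj_neg
  have hsq : (ψ : ℝ) ^ 2 = ψ + 1 := goldenConj_sq
  have hinv : (1 : ℝ) / phi = -ψ := by
    rw [phi_eq_gold, one_div, inv_goldenRatio]
  have hub := psi_sum_lt S hS
  have hlb := psi_sum_gt S hS
  have hK : ((∑ i ∈ S, Nat.fib (i + 1) : ℕ) : ℝ)
      = goldenRatio * ((∑ i ∈ S, Nat.fib i : ℕ) : ℝ) + ∑ i ∈ S, ψ ^ i := by
    push_cast
    rw [Finset.mul_sum, ← Finset.sum_add_distrib]
    exact Finset.sum_congr rfl fun i _ => fib_shift i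
  have hx : (0:ℝ) ≤ ((∑ i ∈ S, Nat.fib i : ℕ) : ℝ) * phi + 1 / phi := by
    rw [hinv, phi_eq_gold]
    have : (0:ℝ) ≤ ((∑ i ∈ S, Nat.fib i : ℕ) : ℝ) := Nat.cast_nonneg _
    nlinarith
  have h1 : (1:ℝ) / goldenRatio = -ψ := by rw [one_div, inv_goldenRatio]
  rw [rho, Nat.floor_eq_iff hx, hK, phi_eq_gold, h1]
  constructor
  · nlinarith [hub]
  · nlinarith [hlb, hsq]

/-- Zeckendorf sums with all indices at most `m` are less than `fib (m+1)`. -/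
lemma zeck_sum_lt (m : ℕ) : ∀ S : Finset ℕ, (∀ i ∈ S, 2 ≤ i) →
    (∀ i, ¬(i ∈ S ∧ i + 1 ∈ S)) → (∀ i ∈ S, i ≤ m) →
    ∑ i ∈ S, Nat.fib i < Nat.fib (m + 1) := by
  induction m using Nat.strong_induction_on with
  | _ m IH =>
    intro S h2 hnc hle
    by_cases hm : m ∈ S
    · have hm2 : 2 ≤ m := h2 m hm
      obtain ⟨k, rfl⟩ : ∃ k, m = k + 2 := ⟨m - 2, by omega⟩
      have hE : ∀ i ∈ S.erase (k + 2), i ≤ k := by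
        intro i hi
        have hiS := Finset.mem_of_mem_erase hi
        have hne := Finset.ne_of_mem_erase hi
        have hle' := hle i hiS
        have : i ≠ k + 1 := by
          intro h
          exact hnc (k + 1) ⟨h ▸ hiS, by simpa [h] using hm⟩
        omega
      have hElt := IH k (by omega) (S.erase (k + 2))
        (fun i hi => h2 i (Finset.mem_of_mem_erase hi))
        (fun i ⟨ha, hb⟩ => hnc i ⟨Finset.mem_of_mem_erase ha, Finset.mem_of_mem_erase hb⟩)
        hE
      rw [← Finset.add_sum_erase _ _ hm]
      have : Nat.fib (k + 2 + 1) = Nat.fib (k + 1) + Nat.fib (k + 2) := by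
        rw [Nat.fib_add_two]
      omega
    · rcases Nat.eq_zero_or_pos m with rfl | hpos
      · have hS : S = ∅ := Finset.eq_empty_of_forall_notMem fun i hi => by
          have := h2 i hi; have := hle i hi; omega
        simp [hS]
      · obtain ⟨k, rfl⟩ : ∃ k, m = k + 1 := ⟨m - 1, by omega⟩
        have := IH k (by omega) S h2 hnc (fun i hi => by
          have := hle i hi
          have : i ≠ k + 1 := fun h => hm (h ▸ hi)
          omega)
        calc ∑ i ∈ S, Nat.fib i < Nat.fib (k + 1) := this
          _ ≤ Nat.fib (k + 2) := Nat.fib_le_fib_succ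

/-- Uniqueness of Zeckendorf representations. -/
lemma zeck_unique : ∀ n : ℕ, ∀ S T : Finset ℕ, (∀ i ∈ S, 2 ≤ i) →
    (∀ i, ¬(i ∈ S ∧ i + 1 ∈ S)) → (∀ i ∈ T, 2 ≤ i) → (∀ i, ¬(i ∈ T ∧ i + 1 ∈ T)) →
    ∑ i ∈ S, Nat.fib i = n → ∑ i ∈ T, Nat.fib i = n → S = T := by
  intro n
  induction n using Nat.strong_induction_on with
  | _ n IH =>
    intro S T hS2 hSnc hT2 hTnc hSsum hTsum
    have hempty : ∀ U : Finset ℕ, (∀ i ∈ U, 2 ≤ i) → ∑ i ∈ U, Nat.fib i = 0 → U = ∅ := by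
      intro U hU hsum
      apply Finset.eq_empty_of_forall_notMem
      intro i hi
      have h1 : Nat.fib i ≠ 0 := by
        have : 0 < Nat.fib i := Nat.fib_pos.mpr (by have := hU i hi; omega)
        omega
      exact h1 ((Finset.sum_eq_zero_iff).mp hsum i hi)
    rcases Nat.eq_zero_or_pos n with rfl | hn
    · rw [hempty S hS2 hSsum, hempty T hT2 hTsum]
    · have hSne : S.Nonempty := by
        rcases S.eq_empty_or_nonempty with rfl | h
        · simp at hSsum; omega
        · exact h
      have hTne : T.Nonempty := by
        rcases T.eq_empty_or_nonempty with rfl | h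
        · simp at hTsum; omega
        · exact h
      have hmaxle : ∀ (A B : Finset ℕ) (hA : A.Nonempty) (hB : B.Nonempty),
          (∀ i ∈ A, 2 ≤ i) → (∀ i, ¬(i ∈ A ∧ i + 1 ∈ A)) →
          (∀ i ∈ B, 2 ≤ i) → (∀ i, ¬(i ∈ B ∧ i + 1 ∈ B)) →
          ∑ i ∈ A, Nat.fib i = n → ∑ i ∈ B, Nat.fib i = n →
          A.max' hA ≤ B.max' hB := by
        intro A B hA hB hA2 hAnc hB2 hBnc hAsum hBsum
        by_contra hlt
        push_neg at hlt
        have h1 : ∑ i ∈ A, Nat.fib i < Nat.fib (A.max' hA + 1) :=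
          zeck_sum_lt (A.max' hA) A hA2 hAnc (fun i hi => Finset.le_max' A i hi)
        have h2 : Nat.fib (B.max' hB) ≤ Nat.fib (A.max' hA + 1) :=
          Nat.fib_mono (by omega)
        have h3 : Nat.fib (B.max' hB) ≤ ∑ i ∈ B, Nat.fib i :=
          Finset.single_le_sum (fun i _ => Nat.zero_le _) (B.max'_mem hB)
        -- B.max' < A.max', so fib (A.max') ≤ n = sum A < fib (A.max'+1) ...
        have h4 : Nat.fib (A.max' hA) ≤ ∑ i ∈ A, Nat.fib i :=
          Finset.single_le_sum (fun i _ => Nat.zero_le _) (A.max'_mem hA)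
        have h5 : ∑ i ∈ B, Nat.fib i < Nat.fib (B.max' hB + 1) :=
          zeck_sum_lt (B.max' hB) B hB2 hBnc (fun i hi => Finset.le_max' B i hi)
        have h6 : Nat.fib (B.max' hB + 1) ≤ Nat.fib (A.max' hA) :=
          Nat.fib_mono (by omega)
        omega
      have hab : S.max' hSne = T.max' hTne :=
        le_antisymm (hmaxle S T hSne hTne hS2 hSnc hT2 hTnc hSsum hTsum)
          (hmaxle T S hTne hSne hT2 hTnc hS2 hSnc hTsum hSsum)
      set a := S.max' hSne with ha
      have haT : a ∈ T := hab ▸ T.max'_mem hTne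
      have haS : a ∈ S := S.max'_mem hSne
      have hfa : 0 < Nat.fib a := Nat.fib_pos.mpr (by have := hS2 a haS; omega)
      have hSsum' : ∑ i ∈ S.erase a, Nat.fib i = n - Nat.fib a := by
        have := Finset.add_sum_erase S Nat.fib haS
        omega
      have hTsum' : ∑ i ∈ T.erase a, Nat.fib i = n - Nat.fib a := by
        have := Finset.add_sum_erase T Nat.fib haT
        omega
      have hfalen : Nat.fib a ≤ n := hSsum ▸
        Finset.single_le_sum (fun i _ => Nat.zero_le _) haS
      have hE : S.erase a = T.erase a :=
        IH (n - Nat.fib a) (by omega) _ _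
          (fun i hi => hS2 i (Finset.mem_of_mem_erase hi))
          (fun i ⟨h1, h2⟩ => hSnc i ⟨Finset.mem_of_mem_erase h1, Finset.mem_of_mem_erase h2⟩)
          (fun i hi => hT2 i (Finset.mem_of_mem_erase hi))
          (fun i ⟨h1, h2⟩ => hTnc i ⟨Finset.mem_of_mem_erase h1, Finset.mem_of_mem_erase h2⟩)
          hSsum' hTsum'
      rw [← Finset.insert_erase haS, ← Finset.insert_erase haT, hE]

/-- If `sF n` is the number of terms in the Zeckendorf representation of `n`
(the unique representation of `n` as a sum of distinct nonconsecutive Fibonacci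
numbers `F i`, `i ≥ 2`), then `sF (ρ n) = sF n` and `sF (ρ (ρ n) + 1) = sF n + 1`. -/
theorem sF_recursions
    (sF : ℕ → ℕ)
    (hsF : ∀ n, ∃ S : Finset ℕ, (∀ i ∈ S, 2 ≤ i) ∧
      (∀ i, ¬(i ∈ S ∧ i + 1 ∈ S)) ∧ (∑ i ∈ S, Nat.fib i) = n ∧ sF n = S.card)
    (n : ℕ) :
    sF (rho n) = sF n ∧ sF (rho (rho n) + 1) = sF n + 1 := by
  classical
  obtain ⟨S, hS2, hSnc, hSsum, hScard⟩ := hsF n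
  have hinj1 : ∀ a ∈ S, ∀ b ∈ S, a + 1 = b + 1 → a = b := fun a _ b _ h => by omega
  have hinj2 : ∀ a ∈ S, ∀ b ∈ S, a + 2 = b + 2 → a = b := fun a _ b _ h => by omega
  have hS1sum : ∑ i ∈ S.image (· + 1), Nat.fib i = ∑ i ∈ S, Nat.fib (i + 1) :=
    Finset.sum_image hinj1
  have hS12 : ∀ i ∈ S.image (· + 1), 2 ≤ i := by
    intro i hi; obtain ⟨a, ha, rfl⟩ := Finset.mem_image.mp hi; have := hS2 a ha; omega
  have hS1nc : ∀ i, ¬(i ∈ S.image (· + 1) ∧ i + 1 ∈ S.image (· + 1)) := by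
    rintro i ⟨h1, h2⟩
    obtain ⟨a, ha, ha'⟩ := Finset.mem_image.mp h1
    obtain ⟨b, hb, hb'⟩ := Finset.mem_image.mp h2
    refine hSnc a ⟨ha, ?_⟩
    have hba : b = a + 1 := by omega
    exact hba ▸ hb
  have hrho : rho n = ∑ i ∈ S.image (· + 1), Nat.fib i := by
    rw [hS1sum, ← hSsum]; exact rho_sum S hS2
  have hcard1 : (S.image (· + 1)).card = S.card :=
    Finset.card_image_of_injOn fun a ha b hb h => hinj1 a ha b hb h
  obtain ⟨T, hT2, hTnc, hTsum, hTcard⟩ := hsF (rho n)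
  have hTeq : T = S.image (· + 1) :=
    zeck_unique (rho n) T (S.image (· + 1)) hT2 hTnc hS12 hS1nc hTsum hrho.symm
  have part1 : sF (rho n) = sF n := by rw [hTcard, hTeq, hcard1, hScard]
  have hrho2 : rho (rho n) = ∑ i ∈ S, Nat.fib (i + 2) := by
    rw [hrho, rho_sum (S.image (· + 1)) hS12, Finset.sum_image hinj1]
  have h2notmem : 2 ∉ S.image (· + 2) := by
    intro h; obtain ⟨a, ha, ha'⟩ := Finset.mem_image.mp h; have := hS2 a ha; omega
  have hS2sum : ∑ i ∈ insert 2 (S.image (· + 2)), Nat.fib i = rho (rho n) + 1 := by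
    rw [Finset.sum_insert h2notmem, Finset.sum_image hinj2, hrho2, Nat.fib_two,
      Nat.add_comm]
  have hS22 : ∀ i ∈ insert 2 (S.image (· + 2)), 2 ≤ i := by
    intro i hi
    rcases Finset.mem_insert.mp hi with rfl | h
    · exact le_rfl
    · obtain ⟨a, ha, rfl⟩ := Finset.mem_image.mp h; omega
  have hS2nc : ∀ i, ¬(i ∈ insert 2 (S.image (· + 2)) ∧ i + 1 ∈ insert 2 (S.image (· + 2))) := by
    rintro i ⟨h1, h2⟩
    rcases Finset.mem_insert.mp h1 with rfl | h1'
    case _ => rcases Finset.mem_insert.mp h2 with h | h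
              · omega
              · obtain ⟨b, hb, hb'⟩ := Finset.mem_image.mp h; have := hS2 b hb; omega
    obtain ⟨a, ha, ha'⟩ := Finset.mem_image.mp h1'
    rcases Finset.mem_insert.mp h2 with h | h
    · have := hS2 a ha; omega
    · obtain ⟨b, hb, hb'⟩ := Finset.mem_image.mp h
      refine hSnc a ⟨ha, ?_⟩
      have hba : b = a + 1 := by omega
      exact hba ▸ hb
  have hcard2 : (insert 2 (S.image (· + 2))).card = S.card + 1 := by
    rw [Finset.card_insert_of_notMem h2notmem,
      Finset.card_image_of_injOn fun a ha b hb h => hinj2 a ha b hb h]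
  obtain ⟨U, hU2, hUnc, hUsum, hUcard⟩ := hsF (rho (rho n) + 1)
  have hUeq : U = insert 2 (S.image (· + 2)) :=
    zeck_unique _ U _ hU2 hUnc hS22 hS2nc hUsum hS2sum
  exact ⟨part1, by rw [hUcard, hUeq, hcard2, hScard]⟩
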